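/- Let (β,δ) lie in the polynomial regime 𝒫 (so that 1 − β − 2δ < 0) and fix K > 0. With 𝔖_N := 2m/(ρ + 2m) (the sum of the alternating series Σ_{k≥0} (−1)^k (2m/ρ)^{k+1}) and d_N(n) := ∏_{j=1}^{n} (q_j/p_j), one has, uniformly over 1 ≤ n ≤ ⌊K N^{1−δ/2}⌋, that log d_N(n) = −(1−ρ) 𝔖_N n + 𝔖_N n²/(2N) + 𝔖_N(1 − 𝔖_N/2) n³/(3N²) + o(1) as N → ∞; that is, sup_{1 ≤ n ≤ ⌊K N^{1−δ/2}⌋} | log d_N(n) + (1−ρ) 𝔖_N n − 𝔖_N n²/(2N) − 𝔖_N(1 − 𝔖_N/2) n³/(3N²) | → 0. -/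

import Mathlib

/-!
Write `x_j = j/N`, `s = N^{-δ}` and `𝔖 = 𝔖_N`. Each factor of `d_N(n)` is
`q_j/p_j = 1 + 𝔖 (x_j - s)/(1 - x_j)`, and for `n ≤ K N^{1-δ/2}` every `x_j` is at most
`T = K N^{-δ/2}`. The expansion `log (1 + u) = u - u²/2 + O(u³)` turns each `log (q_j/p_j)` into
`𝔖 x_j + 𝔖 (1 - 𝔖/2) x_j² - 𝔖 s` up to `O(𝔖 T (T² + s))`; summing with the closed forms of
`∑ j` and `∑ j²` gives the claimed polynomial up to `O(n 𝔖 T (T² + s)) + O(T)`. Since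
`𝔖 ≤ 4 N^{-β}` and `T² ≍ s = N^{-δ}`, this is `O(N^{1-β-2δ}) + O(N^{-δ/2})`, which vanishes
because `1 - β - 2δ < 0`.
-/

open Filter Finset

namespace MullerRatchet6

/-- Per-capita upward rate of the time-rescaled best-class process:
`p_n = (1/(2m) + 1/ρ)(1 − n/N)` with `m = N^{−β}`, `ρ = 1 − N^{−δ}`. -/
noncomputable def pr (β δ : ℝ) (N n : ℕ) : ℝ :=
  (1 / (2 * (N:ℝ)^(-β)) + 1 / (1 - (N:ℝ)^(-δ))) * (1 - (n:ℝ)/(N:ℝ))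

/-- Per-capita downward rate `q_n = (1/(2m))(1 − n/N) + 1` with `m = N^{−β}`. -/
noncomputable def qr (β : ℝ) (N n : ℕ) : ℝ :=
  (1 / (2 * (N:ℝ)^(-β))) * (1 - (n:ℝ)/(N:ℝ)) + 1

/-- Odds-ratio product `d_N(n) = ∏_{j=1}^{n} q_j/p_j`. -/
noncomputable def d (β δ : ℝ) (N n : ℕ) : ℝ :=
  ∏ j ∈ Finset.Icc 1 n, qr β N j / pr β δ N j

/-- `𝔖_N = 2m/(ρ + 2m)`, the sum of the alternating series `Σ_{k≥0} (−1)^k (2m/ρ)^{k+1}`. -/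
noncomputable def Sfrak (β δ : ℝ) (N : ℕ) : ℝ :=
  2 * (N:ℝ)^(-β) / ((1 - (N:ℝ)^(-δ)) + 2 * (N:ℝ)^(-β))

open Real Topology

lemma abs_log_one_add_sub_le {u : ℝ} (hu : |u| ≤ 1/2) :
    |log (1 + u) - (u - u^2/2)| ≤ 2 * |u|^3 := by
  have h := abs_log_sub_add_sum_range_le (x := -u) (by rw [abs_neg]; linarith) 2
  have e : (∑ i ∈ range 2, (-u)^(i+1)/(i+1 : ℝ)) + log (1 - -u)
      = log (1 + u) - (u - u^2/2) := by
    simp only [sum_range_succ, sum_range_zero, sub_neg_eq_add]; push_cast; ring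
  rw [e, abs_neg] at h
  refine h.trans ?_
  show |u|^3 / (1 - |u|) ≤ _
  rw [div_le_iff₀ (by linarith)]
  nlinarith [mul_nonneg (pow_nonneg (abs_nonneg u) 3) (by linarith : (0:ℝ) ≤ 1 - 2 * |u|)]

lemma abs_log_odds_sub_le {S s t T : ℝ} (hS0 : 0 ≤ S) (hS1 : S ≤ 1) (hs0 : 0 ≤ s)
    (hsT : s ≤ T) (ht0 : 0 ≤ t) (htT : t ≤ T) (hT : T ≤ 1/4) :
    |log (1 + S * (t - s) / (1 - t)) - (S * t + (S - S^2/2) * t^2 - S * s)|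
      ≤ 23 * S * T * (T^2 + s) := by
  have h1t : (3/4 : ℝ) ≤ 1 - t := by linarith
  have habs (a : ℝ) : |S * a / (1 - t)| ≤ 2 * S * |a| := by
    rw [abs_div, abs_mul, abs_of_nonneg hS0, abs_of_pos (by linarith : (0:ℝ) < 1 - t),
      div_le_iff₀ (by linarith)]
    nlinarith [mul_nonneg hS0 (abs_nonneg a)]
  set w := S * (t^2 - s) / (1 - t) with hw
  set u := S * (t - s) / (1 - t) with hu
  have hu_eq : u = S * t + w := by rw [hu, hw]; field_simp; ring
  have hw_le : |w| ≤ 2 * S * (T^2 + s) :=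
    (habs _).trans (by gcongr; exact abs_le.2 ⟨by nlinarith, by nlinarith⟩)
  have hu_le : |u| ≤ 2 * S * T :=
    (habs _).trans (by gcongr; exact abs_le.2 ⟨by linarith, by linarith⟩)
  have hlog := abs_log_one_add_sub_le (u := u) (by nlinarith)
  have hcube : 2 * |u|^3 ≤ 16 * S * T * (T^2 + s) := by
    have h1 := pow_le_pow_left₀ (abs_nonneg u) hu_le 3
    have h2 : S^3 * T^3 ≤ S * T^3 := mul_le_mul_of_nonneg_right
      (pow_le_of_le_one hS0 hS1 (by norm_num)) (pow_nonneg (hs0.trans hsT) 3)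
    nlinarith [mul_nonneg (mul_nonneg hS0 (hs0.trans hsT)) hs0]
  have hlin : |t * w| ≤ 2 * S * T * (T^2 + s) := by
    rw [abs_mul, abs_of_nonneg ht0]
    nlinarith [abs_nonneg w, mul_nonneg hS0 (add_nonneg (sq_nonneg T) hs0)]
  have hquad : |w * (2 * S * t + w) / 2| ≤ 5 * S * T * (T^2 + s) := by
    have h2 : |2 * S * t + w| ≤ 5 * T := by
      refine (abs_add_le _ _).trans ?_
      rw [abs_of_nonneg (by positivity)]
      nlinarith [mul_le_mul_of_nonneg_left htT hS0]
    rw [abs_div, abs_mul, abs_two]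
    linarith [mul_le_mul hw_le h2 (abs_nonneg _) (by positivity)]
  calc |log (1 + u) - (S * t + (S - S^2/2) * t^2 - S * s)|
      = |(log (1 + u) - (u - u^2/2)) + t * w - w * (2 * S * t + w) / 2| := by
        congr 1; rw [hu_eq, hw]; field_simp; ring
    _ ≤ |log (1 + u) - (u - u^2/2)| + |t * w| + |w * (2 * S * t + w) / 2| :=
        (abs_sub _ _).trans (by gcongr; exact abs_add_le _ _)
    _ ≤ 23 * S * T * (T^2 + s) := by linarith

lemma sum_Icc_quadratic_div (a b c : ℝ) (N n : ℕ) :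
    ∑ j ∈ Icc 1 n, (a * ((j:ℝ)/N) + b * ((j:ℝ)/N)^2 - c)
      = a * (n * (n + 1)) / (2 * N) + b * (n * (n + 1) * (2 * n + 1)) / (6 * N^2) - c * n := by
  induction n with
  | zero => simp
  | succ k ih =>
    rw [sum_Icc_succ_top (by omega), ih]
    push_cast; ring

lemma abs_sum_log_odds_sub_le {S s T : ℝ} {N n : ℕ} (hS0 : 0 ≤ S) (hS1 : S ≤ 1) (hs0 : 0 ≤ s)
    (hsT : s ≤ T) (hT : T ≤ 1/4) (hn : (n:ℝ)/N ≤ T) :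
    |∑ j ∈ Icc 1 n, (log (1 + S * ((j:ℝ)/N - s) / (1 - (j:ℝ)/N))
        - (S * ((j:ℝ)/N) + (S - S^2/2) * ((j:ℝ)/N)^2 - S * s))|
      ≤ n * (23 * S * T * (T^2 + s)) := by
  refine (abs_sum_le_sum_abs _ _).trans <|
    (sum_le_card_nsmul _ _ (23 * S * T * (T^2 + s)) fun j hj => ?_).trans_eq (by simp)
  have hjn : (j:ℝ)/N ≤ n/N := by gcongr; exact_mod_cast (mem_Icc.1 hj).2
  exact abs_log_odds_sub_le hS0 hS1 hs0 hsT (by positivity) (hjn.trans hn) hT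

lemma odds_ratio_eq {m s x : ℝ} (hm : 0 < m) (hs : s < 1) (hx : x < 1) :
    (1 / (2 * m) * (1 - x) + 1) / ((1 / (2 * m) + 1 / (1 - s)) * (1 - x))
      = 1 + 2 * m / ((1 - s) + 2 * m) * (x - s) / (1 - x) := by
  have : 0 < 1 - s := sub_pos.2 hs
  have : 0 < 1 - x := sub_pos.2 hx
  field_simp
  ring

lemma log_d_eq_sum {β δ : ℝ} {N n : ℕ} (hN : 0 < N) (hs : (N:ℝ)^(-δ) < 1)
    (hn : (n:ℝ)/N < 1) :
    log (d β δ N n) = ∑ j ∈ Icc 1 n,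
      log (1 + Sfrak β δ N * ((j:ℝ)/N - (N:ℝ)^(-δ)) / (1 - (j:ℝ)/N)) := by
  have hm : 0 < (N:ℝ)^(-β) := by positivity
  have hjN : ∀ j ∈ Icc 1 n, (j:ℝ)/N < 1 := fun j hj =>
    lt_of_le_of_lt (by gcongr; exact_mod_cast (mem_Icc.1 hj).2) hn
  rw [d, log_prod]
  · exact sum_congr rfl fun j hj => by rw [qr, pr, odds_ratio_eq hm hs (hjN j hj), Sfrak]
  · intro j hj
    have hx := sub_pos.2 (hjN j hj)
    have hρ := sub_pos.2 hs
    exact (div_pos (by unfold qr; positivity) (by unfold pr; positivity)).ne'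

section Sfrak

variable {β δ : ℝ} {N : ℕ}

lemma Sfrak_nonneg (hs : (N:ℝ)^(-δ) ≤ 1) : 0 ≤ Sfrak β δ N := by
  unfold Sfrak; have := sub_nonneg.2 hs; positivity

lemma Sfrak_le_one (hs : (N:ℝ)^(-δ) ≤ 1) : Sfrak β δ N ≤ 1 :=
  div_le_one_of_le₀ (by linarith) (by have := sub_nonneg.2 hs; positivity)

lemma Sfrak_le (hs : (N:ℝ)^(-δ) ≤ 1/2) : Sfrak β δ N ≤ 4 * (N:ℝ)^(-β) := by
  have hm : 0 ≤ (N:ℝ)^(-β) := by positivity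
  rw [Sfrak, div_le_iff₀ (by linarith)]
  nlinarith

end Sfrak

lemma abs_log_d_sub_le {β δ T : ℝ} {N n : ℕ} (hN : 0 < N) (hsT : (N:ℝ)^(-δ) ≤ T)
    (hT : T ≤ 1/4) (hn : (n:ℝ)/N ≤ T) :
    |log (d β δ N n) + (N:ℝ)^(-δ) * Sfrak β δ N * n - Sfrak β δ N * n^2 / (2 * N)
        - Sfrak β δ N * (1 - Sfrak β δ N / 2) * n^3 / (3 * N^2)|
      ≤ n * (23 * Sfrak β δ N * T * (T^2 + (N:ℝ)^(-δ))) + (T/2 + T^2) := by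
  have hN' : (0:ℝ) < N := by exact_mod_cast hN
  have hs0 : 0 ≤ (N:ℝ)^(-δ) := by positivity
  have hS0 : 0 ≤ Sfrak β δ N := Sfrak_nonneg (by linarith)
  have hS1 : Sfrak β δ N ≤ 1 := Sfrak_le_one (by linarith)
  set S := Sfrak β δ N
  set s := (N:ℝ)^(-δ)
  have hsplit :
      log (d β δ N n) + s * S * n - S * n^2 / (2 * N) - S * (1 - S / 2) * n^3 / (3 * N^2) =
        ∑ j ∈ Icc 1 n, (log (1 + S * ((j:ℝ)/N - s) / (1 - (j:ℝ)/N))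
            - (S * ((j:ℝ)/N) + (S - S^2/2) * ((j:ℝ)/N)^2 - S * s))
          + (S * n / (2 * N) + (S - S^2/2) * (3 * n^2 + n) / (6 * N^2)) := by
    rw [sum_sub_distrib, sum_Icc_quadratic_div, ← log_d_eq_sum hN (by linarith) (by linarith)]
    field_simp
    ring
  have hnT : (n:ℝ) ≤ T * N := (div_le_iff₀ hN').1 hn
  have hn2 : (n:ℝ) ≤ n^2 := by exact_mod_cast Nat.le_self_pow two_ne_zero n
  have hc0 : 0 ≤ S - S^2/2 := by nlinarith
  have hrem1 : S * n / (2 * N) ≤ T/2 := by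
    rw [div_le_iff₀ (by positivity)]
    nlinarith [mul_le_mul_of_nonneg_right hS1 (Nat.cast_nonneg n)]
  have hrem2 : (S - S^2/2) * (3 * n^2 + n) / (6 * N^2) ≤ T^2 := by
    rw [div_le_iff₀ (by positivity)]
    nlinarith [mul_le_mul_of_nonneg_right (show S - S^2/2 ≤ 1 by nlinarith)
      (show (0:ℝ) ≤ 3 * n^2 + n by positivity), pow_le_pow_left₀ (Nat.cast_nonneg n) hnT 2]
  rw [hsplit]
  refine (abs_add_le _ _).trans (add_le_add (abs_sum_log_odds_sub_le hS0 hS1 hs0 hsT hT hn) ?_)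
  rw [abs_of_nonneg (by positivity)]
  exact add_le_add hrem1 hrem2

lemma abs_log_d_sub_le_rpow {β δ K : ℝ} {N n : ℕ} (hN : 0 < N) (hKN : (N:ℝ)^(-δ/2) ≤ K)
    (hT : K * (N:ℝ)^(-δ/2) ≤ 1/4) (hn : (n:ℝ) ≤ K * (N:ℝ)^(1-δ/2)) :
    |log (d β δ N n) + (N:ℝ)^(-δ) * Sfrak β δ N * n - Sfrak β δ N * n^2 / (2 * N)
        - Sfrak β δ N * (1 - Sfrak β δ N / 2) * n^3 / (3 * N^2)|
      ≤ 92 * K^2 * (K^2 + 1) * (N:ℝ)^(1-β-2*δ)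
        + (K * (N:ℝ)^(-δ/2) / 2 + (K * (N:ℝ)^(-δ/2))^2) := by
  have hN' : (0:ℝ) < N := by exact_mod_cast hN
  have hs : (N:ℝ)^(-δ) = ((N:ℝ)^(-δ/2))^2 := by
    rw [← rpow_mul_natCast hN'.le]; norm_num
  have hNy : (N:ℝ)^(1-δ/2) = N * (N:ℝ)^(-δ/2) := by
    rw [sub_eq_add_neg, rpow_add hN', rpow_one, neg_div]
  have hpow : (N:ℝ)^(1-β-2*δ) = N * (N:ℝ)^(-β) * ((N:ℝ)^(-δ/2))^4 := by
    rw [show 1-β-2*δ = 1 + -β + -δ/2 * (4:ℕ) by push_cast; ring, rpow_add hN', rpow_add hN',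
      rpow_one, rpow_mul_natCast hN'.le]
  have hy0 : 0 < (N:ℝ)^(-δ/2) := by positivity
  have hsT : (N:ℝ)^(-δ) ≤ K * (N:ℝ)^(-δ/2) := by
    rw [hs, sq]; exact mul_le_mul_of_nonneg_right hKN hy0.le
  have hnN : (n:ℝ) / N ≤ K * (N:ℝ)^(-δ/2) := by
    rw [div_le_iff₀ hN']; linarith [hNy ▸ hn]
  have hS := Sfrak_le (β := β) (hsT.trans (by linarith))
  have hS0 : 0 ≤ Sfrak β δ N := Sfrak_nonneg (by linarith)
  refine (abs_log_d_sub_le hN hsT hT hnN).trans (add_le_add_left ?_ _)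
  replace hn : (n:ℝ) ≤ N * (K * (N:ℝ)^(-δ/2)) := by rw [hNy] at hn; linarith
  rw [hs, hpow]
  generalize (N:ℝ)^(-δ/2) = y at *
  have hKy : 0 ≤ K * y := by nlinarith
  calc (n:ℝ) * (23 * Sfrak β δ N * (K * y) * ((K * y)^2 + y^2))
      ≤ (N * (K * y)) * (23 * (4 * (N:ℝ)^(-β)) * (K * y) * ((K * y)^2 + y^2)) := by
        gcongr
    _ = 92 * K^2 * (K^2 + 1) * (N * (N:ℝ)^(-β) * y^4) := by ring

lemma tendsto_natCast_rpow_nhds_zero {e : ℝ} (he : e < 0) :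
    Tendsto (fun N : ℕ => (N:ℝ)^e) atTop (𝓝 0) := by
  have := (tendsto_rpow_neg_atTop (neg_pos.2 he)).comp tendsto_natCast_atTop_atTop
  rwa [neg_neg] at this

theorem statement6_general (β δ K : ℝ)
    (hβ1 : β < 1)
    (hδ1 : (1 - β)/2 < δ)
    (hK : 0 < K) :
    ∀ ε : ℝ, 0 < ε → ∃ N₀ : ℕ, ∀ N : ℕ, N₀ ≤ N →
      ∀ n ∈ Finset.Icc 1 ⌊K * (N:ℝ)^(1 - δ/2)⌋₊,
        |Real.log (d β δ N n)
            + (1 - (1 - (N:ℝ)^(-δ))) * Sfrak β δ N * (n:ℝ)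
            - Sfrak β δ N * (n:ℝ)^2 / (2 * (N:ℝ))
            - Sfrak β δ N * (1 - Sfrak β δ N / 2) * (n:ℝ)^3 / (3 * (N:ℝ)^2)| < ε := by
  intro ε hε
  have hy := tendsto_natCast_rpow_nhds_zero (show -δ/2 < 0 by linarith)
  have hT : Tendsto (fun N : ℕ => K * (N:ℝ)^(-δ/2)) atTop (𝓝 0) := by
    simpa using hy.const_mul K
  have hbound : Tendsto (fun N : ℕ => 92 * K^2 * (K^2 + 1) * (N:ℝ)^(1-β-2*δ)
      + (K * (N:ℝ)^(-δ/2) / 2 + (K * (N:ℝ)^(-δ/2))^2)) atTop (𝓝 0) := by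
    simpa using ((tendsto_natCast_rpow_nhds_zero (show 1-β-2*δ < 0 by linarith)).const_mul _).add
      ((hT.div_const 2).add (hT.pow 2))
  obtain ⟨N₀, hN₀⟩ := eventually_atTop.1 <| (eventually_gt_atTop 0).and <|
    (hy.eventually_le_const hK).and <| (hT.eventually_le_const (by norm_num : (0:ℝ) < 1/4)).and <|
      hbound.eventually_lt_const hε
  refine ⟨N₀, fun N hN n hn => ?_⟩
  obtain ⟨hN0, hKN, hTN, hlt⟩ := hN₀ N hN
  have hnK := (Nat.le_floor_iff (by positivity)).1 (mem_Icc.1 hn).2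
  rw [sub_sub_cancel]
  exact (abs_log_d_sub_le_rpow hN0 hKN hTN hnK).trans_lt hlt

/-- In the polynomial regime `𝒫` (so `1 − β − 2δ < 0`), for fixed `K > 0`, uniformly over
`1 ≤ n ≤ ⌊K N^{1−δ/2}⌋`:
`log d_N(n) = −(1−ρ)𝔖_N n + 𝔖_N n²/(2N) + 𝔖_N(1−𝔖_N/2) n³/(3N²) + o(1)`. -/
theorem statement6 (β δ K : ℝ)
    (hβ0 : 0 < β) (hβ1 : β < 1)
    (hδ1 : (1 - β)/2 < δ) (hδ2 : δ < 1 - β)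
    (hK : 0 < K) :
    ∀ ε : ℝ, 0 < ε → ∃ N₀ : ℕ, ∀ N : ℕ, N₀ ≤ N →
      ∀ n ∈ Finset.Icc 1 ⌊K * (N:ℝ)^(1 - δ/2)⌋₊,
        |Real.log (d β δ N n)
            + (1 - (1 - (N:ℝ)^(-δ))) * Sfrak β δ N * (n:ℝ)
            - Sfrak β δ N * (n:ℝ)^2 / (2 * (N:ℝ))
            - Sfrak β δ N * (1 - Sfrak β δ N / 2) * (n:ℝ)^3 / (3 * (N:ℝ)^2)| < ε :=
  statement6_general β δ K hβ1 hδ1 hK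

end MullerRatchet6
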